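/- Let G(z) = 3 Log(1+z) − Log(1 + z e^{2iφ}) where φ = Arg(3 + z), defined for |z| < 1. Then the Jacobian of G (as a map ℝ² → ℝ²) is positive at every point of the unit disk; in particular G is orientation-preserving and locally injective on the unit disk. -/

import Mathlib

open Real Complex

noncomputable def G (z : ℂ) : ℂ :=
  3 * Complex.log (1 + z) - Complex.log (1 + z * Complex.exp (2 * (3 + z).arg * Complex.I))

-- rewritten form
noncomputable def G' (z : ℂ) : ℂ :=
  3 * Complex.log (1 + z) - Complex.log (1 + z * (3 + z) * (3 + (starRingEnd ℂ) z)⁻¹)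

lemma exp_two_arg (w : ℂ) (hw : w ≠ 0) :
    Complex.exp (2 * w.arg * Complex.I) = w * ((starRingEnd ℂ) w)⁻¹ := by
  have h := Complex.norm_mul_exp_arg_mul_I w
  have habs : (‖w‖ : ℂ) ≠ 0 := by
    simpa using norm_ne_zero_iff.mpr hw
  have hcw : (starRingEnd ℂ) w ≠ 0 := by simpa using hw
  have hexp : Complex.exp (w.arg * Complex.I) = w / ‖w‖ := by
    rw [eq_div_iff habs, mul_comm]; exact h
  have h2 : Complex.exp (2 * w.arg * Complex.I)
      = Complex.exp (w.arg * Complex.I) * Complex.exp (w.arg * Complex.I) := by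
    rw [← Complex.exp_add]; ring_nf
  have hsq : (‖w‖ : ℂ) * ‖w‖ = w * (starRingEnd ℂ) w := by
    rw [Complex.mul_conj]
    norm_cast
    rw [← Complex.sq_norm]; ring
  rw [h2, hexp]
  rw [div_mul_div_comm, eq_mul_inv_iff_mul_eq₀ hcw, div_mul_eq_mul_div, div_eq_iff (mul_ne_zero habs habs)]
  linear_combination -w * hsq


lemma re_bound (z : ℂ) : -‖z‖ ≤ z.re :=
  neg_le_of_abs_le (Complex.abs_re_le_norm z)

lemma conj_add3 (z : ℂ) : (starRingEnd ℂ) (3 + z) = 3 + (starRingEnd ℂ) z := by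
  rw [map_add, map_ofNat]

lemma ne_of_re_pos {w : ℂ} (h : 0 < w.re) : w ≠ 0 := by
  intro h0; rw [h0] at h; simp at h

lemma h3z (z : ℂ) (hz : ‖z‖ < 1) : (3 : ℂ) + z ≠ 0 := by
  apply ne_of_re_pos
  have := re_bound z
  simp only [Complex.add_re, Complex.ofReal_re]
  norm_num
  linarith

lemma h1z (z : ℂ) (hz : ‖z‖ < 1) : (1 : ℂ) + z ≠ 0 := by
  apply ne_of_re_pos
  have := re_bound z
  simp only [Complex.add_re, Complex.one_re]
  linarith

lemma h3zc (z : ℂ) (hz : ‖z‖ < 1) : (3 : ℂ) + (starRingEnd ℂ) z ≠ 0 := by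
  intro h
  apply h3z z hz
  have h2 : (starRingEnd ℂ) (3 + (starRingEnd ℂ) z) = 0 := by rw [h]; simp
  rwa [map_add, map_ofNat, Complex.conj_conj] at h2

lemma G_eq_G' (z : ℂ) (hz : ‖z‖ < 1) : G z = G' z := by
  unfold G G'
  rw [exp_two_arg _ (h3z z hz), conj_add3]
  ring_nf

lemma normSq_lt_one (z : ℂ) (hz : ‖z‖ < 1) : Complex.normSq z < 1 := by
  rw [← Complex.sq_norm]
  nlinarith [norm_nonneg z]

lemma re_gt_neg_one (z : ℂ) (hz : ‖z‖ < 1) : -1 < z.re := by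
  have h := normSq_lt_one z hz
  rw [Complex.normSq_apply] at h
  nlinarith

lemma hS_re (z : ℂ) (hz : ‖z‖ < 1) :
    0 < ((3 : ℂ) + 3*z + (starRingEnd ℂ) z + z^2).re := by
  have h := normSq_lt_one z hz
  rw [Complex.normSq_apply] at h
  simp only [Complex.add_re, Complex.mul_re, Complex.conj_re, Complex.conj_im, sq,
    Complex.re_ofNat, Complex.im_ofNat]
  nlinarith [sq_nonneg (1 + z.re)]

lemma hSne (z : ℂ) (hz : ‖z‖ < 1) :
    (3 : ℂ) + 3*z + (starRingEnd ℂ) z + z^2 ≠ 0 :=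
  ne_of_re_pos (hS_re z hz)

lemma mem_slit_1z (z : ℂ) (hz : ‖z‖ < 1) : (1 : ℂ) + z ∈ Complex.slitPlane := by
  rw [Complex.mem_slitPlane_iff]
  left
  have := re_bound z
  simp only [Complex.add_re, Complex.one_re]
  linarith

lemma mem_slit_Q (z : ℂ) (hz : ‖z‖ < 1) :
    (1 : ℂ) + z * (3 + z) * (3 + (starRingEnd ℂ) z)⁻¹ ∈ Complex.slitPlane := by
  rw [Complex.mem_slitPlane_iff]
  left
  set t : ℂ := z * (3 + z) * (3 + (starRingEnd ℂ) z)⁻¹ with ht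
  have habs : ‖t‖ = ‖z‖ := by
    rw [ht, norm_mul, norm_mul, norm_inv, ← conj_add3, Complex.norm_conj]
    have h3 : ‖(3 + z)‖ ≠ 0 := norm_ne_zero_iff.mpr (h3z z hz)
    field_simp
  have := re_bound t
  simp only [Complex.add_re, Complex.one_re]
  rw [habs] at this
  linarith

noncomputable def Lmap (A B : ℂ) : ℂ →L[ℝ] ℂ :=
  A • (ContinuousLinearMap.id ℝ ℂ) + B • (Complex.conjCLE.toContinuousLinearMap)

lemma Lmap_apply (A B w : ℂ) : Lmap A B w = A * w + B * (starRingEnd ℂ) w := by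
  simp [Lmap, Complex.conjCLE_apply, smul_eq_mul]

noncomputable def Af (z : ℂ) : ℂ :=
  (6 + 4 * z + 3 * (starRingEnd ℂ) z + z ^ 2)
    / ((1 + z) * (3 + 3 * z + (starRingEnd ℂ) z + z ^ 2))

noncomputable def Bf (z : ℂ) : ℂ :=
  z * (3 + z) / ((3 + (starRingEnd ℂ) z) * (3 + 3 * z + (starRingEnd ℂ) z + z ^ 2))

set_option maxHeartbeats 1000000 in
lemma hasFDerivAt_G' (z : ℂ) (hz : ‖z‖ < 1) :
    HasFDerivAt G' (Lmap (Af z) (Bf z)) z := by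
  have hconj : HasFDerivAt (fun w : ℂ => (starRingEnd ℂ) w)
      (Complex.conjCLE.toContinuousLinearMap) z := by
    exact Complex.conjCLE.hasFDerivAt (x := z)
  have hD : HasFDerivAt (fun w : ℂ => 3 + (starRingEnd ℂ) w)
      (Complex.conjCLE.toContinuousLinearMap) z := hconj.const_add 3
  have hdne : (3 : ℂ) + (starRingEnd ℂ) z ≠ 0 := h3zc z hz
  have hinv : HasFDerivAt (fun w : ℂ => ((3 : ℂ) + (starRingEnd ℂ) w)⁻¹)
      ((-ContinuousLinearMap.mulLeftRight ℝ ℂ ((3 + (starRingEnd ℂ) z))⁻¹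
          ((3 + (starRingEnd ℂ) z))⁻¹).comp (Complex.conjCLE.toContinuousLinearMap)) z :=
    (hasFDerivAt_inv' hdne).comp z hD
  have hN : HasFDerivAt (fun w : ℂ => w * (3 + w))
      (ContinuousLinearMap.restrictScalars ℝ
        (ContinuousLinearMap.smulRight (1 : ℂ →L[ℂ] ℂ) ((3 + z) + z))) z := by
    have : HasDerivAt (fun w : ℂ => w * (3 + w)) (1 * (3 + z) + z * 1) z :=
      (hasDerivAt_id z).mul ((hasDerivAt_id z).const_add 3)
    have := this.hasFDerivAt.restrictScalars ℝ
    rw [ContinuousLinearMap.smulRight_one_eq_toSpanSingleton,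
      show (3 + z) + z = 1 * (3 + z) + z * 1 by ring]
    exact this
  have hQ := ((hN.mul' hinv).const_add 1)
  have hlog1 : HasFDerivAt (fun w : ℂ => 3 * Complex.log (1 + w))
      ((3 : ℂ) • ((ContinuousLinearMap.restrictScalars ℝ
        (ContinuousLinearMap.smulRight (1 : ℂ →L[ℂ] ℂ) ((1 + z)⁻¹))).comp
          (ContinuousLinearMap.id ℝ ℂ))) z := by
    have hl := (Complex.hasDerivAt_log (mem_slit_1z z hz)).hasFDerivAt.restrictScalars ℝ
    have h1 : HasFDerivAt (fun w : ℂ => 1 + w) (ContinuousLinearMap.id ℝ ℂ) z :=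
      (hasFDerivAt_id z).const_add 1
    exact (hl.comp z h1).const_mul 3
  have hlogQ := ((Complex.hasDerivAt_log (mem_slit_Q z hz)).hasFDerivAt.restrictScalars ℝ).comp
      z hQ
  have hG := hlog1.sub hlogQ
  have hGG : HasFDerivAt G' _ z := hG
  convert hGG using 1
  ext w
  rw [Lmap_apply]
  simp only [ContinuousLinearMap.coe_comp', ContinuousLinearMap.coe_restrictScalars',
    Function.comp_apply, ContinuousLinearMap.coe_id', id_eq, ContinuousLinearMap.smulRight_apply,
    ContinuousLinearMap.one_apply, ContinuousLinearMap.coe_sub', ContinuousLinearMap.add_apply,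
    ContinuousLinearMap.coe_smul', Pi.smul_apply, smul_eq_mul,
    ContinuousLinearMap.mulLeftRight_apply, ContinuousLinearMap.neg_apply,
    ContinuousLinearEquiv.coe_coe, Complex.conjCLE_apply, Pi.sub_apply, Pi.add_apply]
  rw [Af, Bf]
  have h1 : (1 : ℂ) + z ≠ 0 := h1z z hz
  have hS : (3 : ℂ) + 3 * z + (starRingEnd ℂ) z + z ^ 2 ≠ 0 := hSne z hz
  have hQne : (1 : ℂ) + z * (3 + z) * (3 + (starRingEnd ℂ) z)⁻¹ ≠ 0 :=
    Complex.slitPlane_ne_zero (mem_slit_Q z hz)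
  have hdne : (3 : ℂ) + (starRingEnd ℂ) z ≠ 0 := h3zc z hz
  have hQrw : (1 : ℂ) + z * (3 + z) * (3 + (starRingEnd ℂ) z)⁻¹
      = (3 + 3 * z + (starRingEnd ℂ) z + z ^ 2) * (3 + (starRingEnd ℂ) z)⁻¹ := by
    field_simp; ring
  rw [hQrw]
  have hSd : ((3 + 3 * z + (starRingEnd ℂ) z + z ^ 2) * (3 + (starRingEnd ℂ) z)⁻¹)⁻¹
      = (3 + (starRingEnd ℂ) z) * (3 + 3 * z + (starRingEnd ℂ) z + z ^ 2)⁻¹ := by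
    rw [mul_inv, inv_inv, mul_comm]
  rw [hSd]
  simp only [ContinuousLinearMap.toSpanSingleton_apply, op_smul_eq_mul, smul_eq_mul]
  have hS2 : (3 : ℂ) * (1 + z) + (starRingEnd ℂ) z + z ^ 2 ≠ 0 := by convert hS using 1; ring
  field_simp
  ring

lemma det_Lmap (A B : ℂ) :
    LinearMap.det ((Lmap A B : ℂ →L[ℝ] ℂ) : ℂ →ₗ[ℝ] ℂ)
      = Complex.normSq A - Complex.normSq B := by
  rw [← LinearMap.det_toMatrix Complex.basisOneI, Matrix.det_fin_two]
  have e0 : (Complex.basisOneI : Module.Basis (Fin 2) ℝ ℂ) 0 = 1 := by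
    simp [Complex.coe_basisOneI]
  have e1 : (Complex.basisOneI : Module.Basis (Fin 2) ℝ ℂ) 1 = Complex.I := by
    simp [Complex.coe_basisOneI]
  simp only [LinearMap.toMatrix_apply, ContinuousLinearMap.coe_coe, e0, e1,
    Complex.coe_basisOneI_repr, Lmap_apply]
  simp [Complex.normSq_apply, Complex.add_re, Complex.add_im, Complex.mul_re, Complex.mul_im]
  ring

lemma key_ineq (z : ℂ) (hz : ‖z‖ < 1) :
    Complex.normSq z * Complex.normSq (1 + z)
      < Complex.normSq (6 + 4 * z + 3 * (starRingEnd ℂ) z + z ^ 2) := by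
  have h := normSq_lt_one z hz
  rw [Complex.normSq_apply] at h
  have hx := re_gt_neg_one z hz
  have h3 : 0 < 3 + 4 * z.re + z.re ^ 2 - z.im ^ 2 := by nlinarith [sq_nonneg (1 + z.re)]
  have hpos : 0 < 12 * (1 + z.re) * (3 + 4 * z.re + z.re ^ 2 - z.im ^ 2) := mul_pos (by linarith) h3
  simp only [Complex.normSq_apply, Complex.add_re, Complex.add_im, Complex.mul_re,
    Complex.mul_im, Complex.conj_re, Complex.conj_im, Complex.one_re, Complex.one_im, sq,
    Complex.re_ofNat, Complex.im_ofNat]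
  nlinarith [hpos]

lemma normSq_pos_S (z : ℂ) (hz : ‖z‖ < 1) :
    0 < Complex.normSq ((3 : ℂ) + 3 * z + (starRingEnd ℂ) z + z ^ 2) :=
  Complex.normSq_pos.mpr (hSne z hz)

lemma det_pos (z : ℂ) (hz : ‖z‖ < 1) :
    0 < Complex.normSq (Af z) - Complex.normSq (Bf z) := by
  have h1 : (1 : ℂ) + z ≠ 0 := h1z z hz
  have h3 : (3 : ℂ) + z ≠ 0 := h3z z hz
  have hS := normSq_pos_S z hz
  have hp1 : 0 < Complex.normSq (1 + z) := Complex.normSq_pos.mpr h1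
  have hp3 : 0 < Complex.normSq (3 + z) := Complex.normSq_pos.mpr h3
  have hdconj : Complex.normSq ((3 : ℂ) + (starRingEnd ℂ) z) = Complex.normSq (3 + z) := by
    rw [← conj_add3, Complex.normSq_conj]
  rw [sub_pos, Af, Bf, map_div₀, map_div₀, map_mul, map_mul, map_mul, hdconj]
  rw [div_lt_div_iff₀ (by positivity) (by positivity)]
  have hkey := key_ineq z hz
  nlinarith [mul_lt_mul_of_pos_right hkey (mul_pos hp3 hS), mul_pos hp3 hS]

theorem G_jacobian_pos :
    ∀ z : ℂ, ‖z‖ < 1 →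
      0 < LinearMap.det ((fderiv ℝ G z : ℂ →L[ℝ] ℂ) : ℂ →ₗ[ℝ] ℂ) ∧
      LinearMap.det ((fderiv ℝ G z : ℂ →L[ℝ] ℂ) : ℂ →ₗ[ℝ] ℂ)
        = ‖(6 + 4 * z + 3 * (starRingEnd ℂ) z + z ^ 2)
            / ((1 + z) * (3 + 3 * z + (starRingEnd ℂ) z + z ^ 2))‖ ^ 2
          - ‖z * (3 + z)
            / ((3 + (starRingEnd ℂ) z) * (3 + 3 * z + (starRingEnd ℂ) z + z ^ 2))‖ ^ 2 := by
  intro z hz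
  have hev : G =ᶠ[nhds z] G' := by
    have hmem : Metric.ball (0 : ℂ) 1 ∈ nhds z := Metric.isOpen_ball.mem_nhds (by
      simpa [Complex.dist_eq] using hz)
    exact Filter.eventuallyEq_of_mem hmem fun w hw =>
      G_eq_G' w (by simpa [Complex.dist_eq] using hw)
  have hfd : fderiv ℝ G z = Lmap (Af z) (Bf z) := by
    rw [hev.fderiv_eq, (hasFDerivAt_G' z hz).fderiv]
  rw [hfd, det_Lmap]
  refine ⟨det_pos z hz, ?_⟩
  rw [Complex.sq_norm, Complex.sq_norm]
  rfl
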